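/- arXiv:1703.10821 — 2 statements merged into one kernel-verified Lean document; each statement's English description precedes it below -/
import Mathlib

section
/- There exists a fractional point satisfying all degree and subtour elimination constraints of bipartite TSP that violates a comb inequality. Concretely, on the bipartite graph with C1 = {a,b,g,h}, C2 = {c,d,e,f}, edge weights x_{ae}=x_{bc}=x_{fg}=x_{dh}=1 and x_{ac}=x_{ad}=x_{bd}=x_{bf}=x_{cg}=0.5 (all other edges 0): (i) every vertex has weighted degree at most 2; (ii) x(S) ≤ |S|-1 for every vertex set S with 3 ≤ |S| ≤ 7; (iii) for the comb with hand H = {a,b,c,d} and teeth T_1 = {a,e}, T_2 = {b,g,c,f}, T_3 = {h,d}, the comb inequality fails: x(H) + x(T_1) + x(T_2) + x(T_3) = 7.5 > 7 = |H| + |T_1| + |T_2| + |T_3| - 5. -/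
open Finset

/-- Directed listing of the weights of the example: vertices `a=0, b=1, g=2, h=3`
(class `C1`) and `c=4, d=5, e=6, f=7` (class `C2`); weight-1 edges
`ae, bc, fg, dh` and weight-`1/2` edges `ac, ad, bd, bf, cg`. -/
def f8 (u v : Fin 8) : ℚ :=
  if (u, v) ∈ ([(0, 6), (1, 4), (7, 2), (5, 3)] : List (Fin 8 × Fin 8)) then 1
  else if (u, v) ∈ ([(0, 4), (0, 5), (1, 5), (1, 7), (4, 2)] : List (Fin 8 × Fin 8))
    then 1 / 2
  else 0

/-- The symmetric edge weighting of the example. -/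
def x8 (u v : Fin 8) : ℚ := f8 u v + f8 v u

/-- The total weight of the edges with both endpoints in `S`. -/
def xw8 (S : Finset (Fin 8)) : ℚ := (∑ u ∈ S, ∑ v ∈ S, x8 u v) / 2


/-- Natural-number version: `m8 u v = 2 * x8 u v`. -/
def m8 (u v : Fin 8) : ℕ :=
  (if (u, v) ∈ ([(0, 6), (1, 4), (7, 2), (5, 3)] : List (Fin 8 × Fin 8)) then 2
  else if (u, v) ∈ ([(0, 4), (0, 5), (1, 5), (1, 7), (4, 2)] : List (Fin 8 × Fin 8))
    then 1 else 0) +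
  (if (v, u) ∈ ([(0, 6), (1, 4), (7, 2), (5, 3)] : List (Fin 8 × Fin 8)) then 2
  else if (v, u) ∈ ([(0, 4), (0, 5), (1, 5), (1, 7), (4, 2)] : List (Fin 8 × Fin 8))
    then 1 else 0)

lemma hx8 (u v : Fin 8) : x8 u v = (m8 u v : ℚ) / 2 := by
  unfold x8 f8 m8
  split <;> (try split) <;> (try split) <;> (try split) <;> push_cast <;> ring

def N8 (S : Finset (Fin 8)) : ℕ := ∑ u ∈ S, ∑ v ∈ S, m8 u v

lemma hxw8 (S : Finset (Fin 8)) : xw8 S = (N8 S : ℚ) / 4 := by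
  unfold xw8 N8
  simp only [hx8, ← Finset.sum_div, Nat.cast_sum]
  ring

/-- A fractional point of the bipartite TSP relaxation violating a comb inequality:
all edges go between the classes `C1 = {a,b,g,h}` and `C2 = {c,d,e,f}`, every vertex
has weighted degree at most `2`, all subtour elimination constraints hold, yet for
the comb with hand `H = {a,b,c,d}` and teeth `T₁ = {a,e}`, `T₂ = {b,g,c,f}`,
`T₃ = {h,d}` the left-hand side is `7.5` while the right-hand side
`|H| + Σ|Tᵢ| - (3t+1)/2` is `7`. -/
theorem stmt_8 :
    (∀ u v : Fin 8, ((u ∈ ({0, 1, 2, 3} : Finset (Fin 8))) ↔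
        (v ∈ ({0, 1, 2, 3} : Finset (Fin 8)))) → x8 u v = 0) ∧
    (∀ v : Fin 8, ∑ u : Fin 8, x8 v u ≤ 2) ∧
    (∀ S : Finset (Fin 8), 3 ≤ S.card → S.card ≤ 7 → xw8 S ≤ (S.card : ℚ) - 1) ∧
    (xw8 {0, 1, 4, 5} + xw8 {0, 6} + xw8 {1, 2, 4, 7} + xw8 {3, 5} = 15 / 2 ∧
      ((({0, 1, 4, 5} : Finset (Fin 8)).card : ℚ) +
        (({0, 6} : Finset (Fin 8)).card : ℚ) +
        (({1, 2, 4, 7} : Finset (Fin 8)).card : ℚ) +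
        (({3, 5} : Finset (Fin 8)).card : ℚ) - 5 = 7) ∧
      (15 : ℚ) / 2 > 7) := by
  refine ⟨?_, ?_, ?_, ?_, ?_, by norm_num⟩
  · intro u v h
    rw [hx8]
    have : m8 u v = 0 := by revert h; revert u v; decide
    rw [this]; norm_num
  · intro v
    simp only [hx8, ← Finset.sum_div, ← Nat.cast_sum]
    have : ∑ u : Fin 8, m8 v u ≤ 4 := by revert v; decide
    have h2 : ((∑ u : Fin 8, m8 v u : ℕ) : ℚ) ≤ 4 := by exact_mod_cast this
    linarith
  · intro S h3 h7
    rw [hxw8]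
    have key : ∀ S : Finset (Fin 8), 3 ≤ S.card → S.card ≤ 7 →
        N8 S + 4 ≤ 4 * S.card := by
      set_option maxRecDepth 20000 in decide
    have := key S h3 h7
    have h2 : ((N8 S : ℕ) : ℚ) + 4 ≤ 4 * (S.card : ℚ) := by exact_mod_cast this
    linarith
  · rw [hxw8, hxw8, hxw8, hxw8]
    have h1 : N8 {0, 1, 4, 5} = 10 := by decide
    have h2 : N8 {0, 6} = 4 := by decide
    have h3 : N8 {1, 2, 4, 7} = 12 := by decide
    have h4 : N8 {3, 5} = 4 := by decide
    rw [h1, h2, h3, h4]; norm_num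
  · have c1 : (({0, 1, 4, 5} : Finset (Fin 8)).card) = 4 := by decide
    have c2 : (({0, 6} : Finset (Fin 8)).card) = 2 := by decide
    have c3 : (({1, 2, 4, 7} : Finset (Fin 8)).card) = 4 := by decide
    have c4 : (({3, 5} : Finset (Fin 8)).card) = 2 := by decide
    rw [c1, c2, c3, c4]; norm_num
end

section
/- In the single-intersection comb setting of bipartite TSP, summing p degree constraints of the form Σ_{u∈T_i\{a_i}} x_{a_i u} + Σ_{u∈H∩C2} x_{a_i u} ≤ 2 (for the p hand vertices a_i in class C1), p subtour constraints x(T_i \ {a_i}) ≤ |T_i| - 2, and q subtour constraints x(T_i) ≤ |T_i| - 1 (for the q teeth whose hand vertex is in C2) yields x(H) + Σ_{i=1}^t x(T_i) ≤ Σ_{i=1}^t |T_i| - q = |H| + Σ_{i=1}^t |T_i| - p - 2q. -/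
open Finset

/-- The total weight of the edges with both endpoints in `S`. -/
noncomputable def combWeight {V : Type*} [DecidableEq V] (x : V → V → ℝ) (S : Finset V) : ℝ :=
  (∑ u ∈ S, ∑ v ∈ S, x u v) / 2

/-- In the single-intersection comb setting for bipartite TSP, summing the `p`
degree constraints `Σ_{u ∈ Tᵢ \ {aᵢ}} x_{aᵢu} + Σ_{u ∈ H ∩ C2} x_{aᵢu} ≤ 2`
(for the hand vertices `aᵢ ∈ C1`), the `p` subtour constraints
`x(Tᵢ \ {aᵢ}) ≤ |Tᵢ| - 2`, and the `q` subtour constraints `x(Tᵢ) ≤ |Tᵢ| - 1`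
(for the teeth whose hand vertex is in `C2`) yields
`x(H) + Σᵢ x(Tᵢ) ≤ Σᵢ |Tᵢ| - q = |H| + Σᵢ |Tᵢ| - p - 2q`. -/
theorem stmt_12 {V : Type*} [Fintype V] [DecidableEq V] (C1 : Finset V)
    (x : V → V → ℝ)
    (hsymm : ∀ u v, x u v = x v u) (hnonneg : ∀ u v, 0 ≤ x u v)
    (hle1 : ∀ u v, x u v ≤ 1) (hdiag : ∀ v, x v v = 0)
    (hbip : ∀ u v, ((u ∈ C1) ↔ (v ∈ C1)) → x u v = 0)
    (t p q : ℕ) (htpq : t = p + q)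
    (H : Finset V) (T : Fin t → Finset V) (a : Fin t → V)
    (hTdisj : ∀ i j : Fin t, i ≠ j → Disjoint (T i) (T j))
    (hsingle : ∀ i : Fin t, H ∩ T i = {a i})
    (hHsub : ∀ v ∈ H, ∃ i : Fin t, v ∈ T i)
    (haC1 : ∀ i : Fin t, (i : ℕ) < p → a i ∈ C1)
    (haC2 : ∀ i : Fin t, p ≤ (i : ℕ) → a i ∉ C1)
    (hdeg : ∀ i : Fin t, (i : ℕ) < p →
      (∑ u ∈ T i \ {a i}, x (a i) u) + (∑ u ∈ H ∩ C1ᶜ, x (a i) u) ≤ 2)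
    (hsub1 : ∀ i : Fin t, (i : ℕ) < p →
      combWeight x (T i \ {a i}) ≤ ((T i).card : ℝ) - 2)
    (hsub2 : ∀ i : Fin t, p ≤ (i : ℕ) →
      combWeight x (T i) ≤ ((T i).card : ℝ) - 1) :
    combWeight x H + ∑ i : Fin t, combWeight x (T i) ≤
        (∑ i : Fin t, ((T i).card : ℝ)) - q ∧
      (∑ i : Fin t, ((T i).card : ℝ)) - q =
        (H.card : ℝ) + (∑ i : Fin t, ((T i).card : ℝ)) - p - 2 * q := by
  -- basic facts about the hand vertices
  have haHT : ∀ i : Fin t, a i ∈ H ∩ T i := by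
    intro i; rw [hsingle]; exact mem_singleton_self _
  have haT : ∀ i : Fin t, a i ∈ T i := fun i => (mem_inter.mp (haHT i)).2
  have haH : ∀ i : Fin t, a i ∈ H := fun i => (mem_inter.mp (haHT i)).1
  have hainj : Function.Injective a := by
    intro i j hij
    by_contra hne
    exact (Finset.disjoint_left.mp (hTdisj i j hne) (haT i)) (hij ▸ haT j)
  have hHeq : H = Finset.image a Finset.univ := by
    apply Finset.ext; intro v
    constructor
    · intro hv
      obtain ⟨i, hi⟩ := hHsub v hv
      have hmem : v ∈ H ∩ T i := mem_inter.mpr ⟨hv, hi⟩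
      rw [hsingle] at hmem
      exact mem_image.mpr ⟨i, mem_univ i, (mem_singleton.mp hmem).symm⟩
    · intro hv
      obtain ⟨i, _, hi⟩ := mem_image.mp hv
      exact hi ▸ haH i
  have hHcard : (H.card : ℝ) = (t : ℝ) := by
    rw [hHeq, Finset.card_image_of_injective _ hainj]
    simp
  -- the index sets
  set F1 : Finset (Fin t) := Finset.univ.filter (fun i : Fin t => (i : ℕ) < p) with hF1def
  set F2 : Finset (Fin t) := Finset.univ.filter (fun i : Fin t => ¬ (i : ℕ) < p) with hF2def
  have hple : p ≤ t := by omega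
  have hF1card : F1.card = p := by
    rw [hF1def]
    have : Finset.univ.filter (fun i : Fin t => (i : ℕ) < p)
        = Finset.image (Fin.castLE hple) Finset.univ := by
      ext i
      simp only [mem_filter, mem_univ, true_and, mem_image]
      constructor
      · intro h; exact ⟨⟨(i : ℕ), h⟩, by simp [Fin.ext_iff]⟩
      · rintro ⟨j, rfl⟩; exact j.2
    rw [this, Finset.card_image_of_injective _ (Fin.castLE_injective hple)]
    simp
  have hF2card : F2.card = q := by
    have h12 : F1.card + F2.card = t := by
      rw [hF1def, hF2def, Finset.card_filter_add_card_filter_not]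
      simp
    omega
  -- decomposition of combWeight when removing a vertex
  have hdecomp : ∀ (S : Finset V) (b : V), b ∈ S →
      combWeight x S = combWeight x (S \ {b}) + ∑ u ∈ S \ {b}, x b u := by
    intro S b hb
    unfold combWeight
    rw [Finset.sum_eq_sum_sdiff_singleton_add hb (fun u => ∑ v ∈ S, x u v)]
    have h2 : ∀ u : V, ∑ v ∈ S, x u v = ∑ v ∈ S \ {b}, x u v + x u b :=
      fun u => Finset.sum_eq_sum_sdiff_singleton_add hb _
    simp only [h2]
    rw [Finset.sum_add_distrib]
    have h3 : ∑ u ∈ S \ {b}, x u b = ∑ u ∈ S \ {b}, x b u :=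
      Finset.sum_congr rfl (fun u _ => hsymm u b)
    rw [h3, hdiag]
    ring
  -- the hand weight is the sum of cross terms from C1-hand vertices
  have hcombH : combWeight x H = ∑ i ∈ F1, ∑ v ∈ H ∩ C1ᶜ, x (a i) v := by
    have hHsplit : H = (H ∩ C1) ∪ (H ∩ C1ᶜ) := by
      rw [← Finset.inter_union_distrib_left, Finset.union_compl, Finset.inter_univ]
    have hdisjAB : Disjoint (H ∩ C1) (H ∩ C1ᶜ) :=
      Finset.disjoint_of_subset_left (Finset.inter_subset_right)
        (Finset.disjoint_of_subset_right (Finset.inter_subset_right)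
          (disjoint_compl_right))
    have hAA : ∑ u ∈ H ∩ C1, ∑ v ∈ H ∩ C1, x u v = 0 := by
      apply Finset.sum_eq_zero; intro u hu
      apply Finset.sum_eq_zero; intro v hv
      exact hbip u v (by
        simp only [iff_true_intro (mem_inter.mp hu).2, iff_true_intro (mem_inter.mp hv).2])
    have hBB : ∑ u ∈ H ∩ C1ᶜ, ∑ v ∈ H ∩ C1ᶜ, x u v = 0 := by
      apply Finset.sum_eq_zero; intro u hu
      apply Finset.sum_eq_zero; intro v hv
      have hu' : u ∉ C1 := by simpa using (mem_inter.mp hu).2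
      have hv' : v ∉ C1 := by simpa using (mem_inter.mp hv).2
      exact hbip u v (by simp [hu', hv'])
    have hBA : ∑ u ∈ H ∩ C1ᶜ, ∑ v ∈ H ∩ C1, x u v
        = ∑ u ∈ H ∩ C1, ∑ v ∈ H ∩ C1ᶜ, x u v := by
      rw [Finset.sum_comm]
      exact Finset.sum_congr rfl (fun u _ => Finset.sum_congr rfl (fun v _ => hsymm v u))
    have hA : H ∩ C1 = Finset.image a F1 := by
      ext v
      simp only [hF1def, mem_inter, mem_image, mem_filter, mem_univ, true_and]
      constructor
      · rintro ⟨hvH, hvC⟩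
        obtain ⟨i, hi⟩ := hHsub v hvH
        have hmem : v ∈ H ∩ T i := mem_inter.mpr ⟨hvH, hi⟩
        rw [hsingle] at hmem
        have hva : v = a i := mem_singleton.mp hmem
        refine ⟨i, ?_, hva.symm⟩
        by_contra hip
        exact haC2 i (by omega) (hva ▸ hvC)
      · rintro ⟨i, hip, rfl⟩
        exact ⟨haH i, haC1 i hip⟩
    have hsum : ∑ u ∈ H, ∑ v ∈ H, x u v
        = 2 * ∑ u ∈ H ∩ C1, ∑ v ∈ H ∩ C1ᶜ, x u v := by
      conv_lhs => rw [hHsplit]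
      rw [Finset.sum_union hdisjAB]
      have inner : ∀ (s : Finset V), ∑ u ∈ s, ∑ v ∈ (H ∩ C1) ∪ (H ∩ C1ᶜ), x u v
          = ∑ u ∈ s, (∑ v ∈ H ∩ C1, x u v + ∑ v ∈ H ∩ C1ᶜ, x u v) := by
        intro s
        exact Finset.sum_congr rfl (fun u _ => Finset.sum_union hdisjAB)
      rw [inner, inner, Finset.sum_add_distrib, Finset.sum_add_distrib, hAA, hBB, hBA]
      ring
    unfold combWeight
    rw [hsum, hA, Finset.sum_image (fun i _ j _ h => hainj h)]
    ring
  constructor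
  · -- the main inequality
    have hsplitT : ∑ i : Fin t, combWeight x (T i)
        = ∑ i ∈ F1, combWeight x (T i) + ∑ i ∈ F2, combWeight x (T i) := by
      rw [hF1def, hF2def, Finset.sum_filter_add_sum_filter_not]
    have key1 : ∀ i ∈ F1, (∑ v ∈ H ∩ C1ᶜ, x (a i) v) + combWeight x (T i)
        ≤ ((T i).card : ℝ) := by
      intro i hi
      have hip : (i : ℕ) < p := (mem_filter.mp hi).2
      have h1 := hdeg i hip
      have h2 := hsub1 i hip
      rw [hdecomp (T i) (a i) (haT i)]
      linarith
    have key2 : ∀ i ∈ F2, combWeight x (T i) ≤ ((T i).card : ℝ) - 1 := by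
      intro i hi
      exact hsub2 i (by have := (mem_filter.mp hi).2; omega)
    calc combWeight x H + ∑ i : Fin t, combWeight x (T i)
        = ∑ i ∈ F1, ((∑ v ∈ H ∩ C1ᶜ, x (a i) v) + combWeight x (T i))
            + ∑ i ∈ F2, combWeight x (T i) := by
          rw [hcombH, hsplitT, Finset.sum_add_distrib]; ring
      _ ≤ ∑ i ∈ F1, ((T i).card : ℝ) + ∑ i ∈ F2, (((T i).card : ℝ) - 1) :=
          add_le_add (Finset.sum_le_sum key1) (Finset.sum_le_sum key2)
      _ = (∑ i : Fin t, ((T i).card : ℝ)) - q := by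
          rw [Finset.sum_sub_distrib, Finset.sum_const, hF2card]
          rw [← Finset.sum_filter_add_sum_filter_not Finset.univ
            (fun i : Fin t => (i : ℕ) < p) (fun i => ((T i).card : ℝ))]
          simp only [hF1def, hF2def]
          push_cast
          ring
  · -- the equality
    have ht : (t : ℝ) = (p : ℝ) + (q : ℝ) := by exact_mod_cast congrArg Nat.cast htpq
    rw [hHcard, ht]
    ring
end
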